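/- arXiv:1704.08747 — 4 statements merged into one kernel-verified Lean document; each statement's English description precedes it below -/
import Mathlib

section
/- In a three-circle configuration, let B' be a point lying both on the line through X and Z and on the line through A and C. Then the circle centered at B' with radius dist B' Y is orthogonal to the circle centered at B with radius b, i.e., (dist B B')² = b² + (dist B' Y)². -/
/-!
The tangency points divide the sides of the triangle `ABC` in the ratios of the radii,
e.g. `Z = A + a/(a+b) • (B - A)`. The side lengths `a + b`, `b + c`, `a + c` satisfy the strict
triangle inequality, so `A`, `B`, `C` are affinely independent, and Menelaus' theorem for the
transversal `XZ` gives `B' = A + s • (C - A)` with `s * (a - c) = a`: `B'` is the external centre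
of similitude of `O_A` and `O_C`. Stewart's formula for `dist B B'` together with
`dist B' Y = |s - a/(a+c)| * (a + c)` reduces the claim to this relation.
-/

open AffineMap

variable {V P : Type*}

section Metric

variable [NormedAddCommGroup V] [NormedSpace ℝ V] [MetricSpace P] [NormedAddTorsor V P]

theorem affineIndependent_of_dist_lt_dist_add_dist {A B C : P}
    (hAB : dist A B < dist A C + dist B C) (hBC : dist B C < dist A B + dist A C)
    (hAC : dist A C < dist A B + dist B C) : AffineIndependent ℝ ![A, B, C] := by
  rw [affineIndependent_iff_not_collinear_set]
  intro h
  rcases h.wbtw_or_wbtw_or_wbtw with h | h | h <;>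
    linarith [h.dist_add_dist, dist_comm A B, dist_comm B C, dist_comm A C]

theorem eq_lineMap_of_dist_eq_of_dist_eq [StrictConvexSpace ℝ V] {x y z : P} {a b : ℝ}
    (hxy : dist x y = a) (hyz : dist y z = b) (hxz : dist x z = a + b) :
    y = lineMap x z (a / (a + b)) := by
  have ha : 0 ≤ a := hxy ▸ dist_nonneg
  have hb : 0 ≤ b := hyz ▸ dist_nonneg
  rcases (add_nonneg ha hb).eq_or_lt' with h | h
  · obtain rfl : a = 0 := by linarith
    simp [← dist_eq_zero.1 hxy]
  · apply eq_lineMap_of_dist_eq_mul_of_dist_eq_mul <;> rw [hxz] <;> field_simp <;> linarith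

end Metric

theorem dist_sq_lineMap [NormedAddCommGroup V] [InnerProductSpace ℝ V] [MetricSpace P]
    [NormedAddTorsor V P] (p a b : P) (t : ℝ) :
    dist p (lineMap a b t) ^ 2 =
      (1 - t) * dist p a ^ 2 + t * dist p b ^ 2 - t * (1 - t) * dist a b ^ 2 := by
  have hab : a -ᵥ b = (p -ᵥ b) - (p -ᵥ a) := (vsub_sub_vsub_cancel_left _ _ _).symm
  simp only [dist_eq_norm_vsub V, vsub_lineMap, lineMap_apply_module, hab,
    ← real_inner_self_eq_norm_sq, inner_add_left, inner_add_right, inner_sub_left,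
    inner_sub_right, real_inner_smul_left, real_inner_smul_right, real_inner_comm (p -ᵥ a)]
  ring

section Affine

variable {k : Type*} [AddCommGroup V] [AddTorsor V P]

theorem AffineIndependent.linearIndependent_vsub_fin_three [Ring k] [Module k V]
    {p : Fin 3 → P} (h : AffineIndependent k p) :
    LinearIndependent k ![p 1 -ᵥ p 0, p 2 -ᵥ p 0] := by
  rw [affineIndependent_iff_linearIndependent_vsub k p 0] at h
  convert h.comp (fun i : Fin 2 ↦ (⟨i.succ, i.succ_ne_zero⟩ : {j : Fin 3 // j ≠ 0}))
    fun i j hij ↦ by simpa using hij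
  ext i
  fin_cases i <;> rfl

/-- Menelaus' theorem: for `Z = lineMap A B α`, `X = lineMap B C β` and `p = lineMap A C s`, the
relation is `(AZ / ZB) * (BX / XC) * (Cp / pA) = -1` with denominators cleared. -/
theorem AffineIndependent.menelaus [CommRing k] [Module k V] {A B C p : P} {α β : k}
    (hABC : AffineIndependent k ![A, B, C]) (hpAC : p ∈ line[k, A, C])
    (hpXZ : p ∈ line[k, lineMap B C β, lineMap A B α]) :
    ∃ s : k, p = lineMap A C s ∧ s * (1 - α) * (1 - β) + (1 - s) * α * β = 0 := by
  obtain ⟨s, rfl⟩ := mem_affineSpan_pair_iff_exists_lineMap_eq.1 hpAC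
  obtain ⟨t, ht⟩ := mem_affineSpan_pair_iff_exists_lineMap_eq.1 hpXZ
  have hrel : ((1 - t) * (1 - β) + t * α) • (B -ᵥ A) + ((1 - t) * β - s) • (C -ᵥ A) = 0 := by
    have h := congrArg (· -ᵥ A) ht
    simp only [lineMap_vsub, vsub_self, lineMap_apply_module] at h
    rw [← sub_eq_zero.2 h]
    module
  obtain ⟨hB, hC⟩ := LinearIndependent.pair_iff.1 hABC.linearIndependent_vsub_fin_three _ _ hrel
  exact ⟨s, rfl, by linear_combination β * hB - ((1 - α) * (1 - β) - α * β) * hC⟩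

end Affine

/-- In a three-circle configuration, the circle centered at `B' = XZ ∩ AC`
with radius `dist B' Y` is orthogonal to the circle `O_B`. -/
theorem inversion_circle_orthogonal_to_OB
    (A B C X Y Z B' : EuclideanSpace ℝ (Fin 2)) (a b c : ℝ)
    (ha : 0 < a) (hb : 0 < b) (hc : 0 < c)
    (hAB : dist A B = a + b) (hBC : dist B C = b + c) (hAC : dist A C = a + c)
    (hZA : dist A Z = a) (hZB : dist B Z = b)
    (hXB : dist B X = b) (hXC : dist C X = c)
    (hYA : dist A Y = a) (hYC : dist C Y = c)
    (hB'XZ : B' ∈ line[ℝ, X, Z]) (hB'AC : B' ∈ line[ℝ, A, C]) :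
    (dist B B') ^ 2 = b ^ 2 + (dist B' Y) ^ 2 := by
  have hZ : Z = lineMap A B (a / (a + b)) :=
    eq_lineMap_of_dist_eq_of_dist_eq hZA (by rw [dist_comm, hZB]) hAB
  have hX : X = lineMap B C (b / (b + c)) :=
    eq_lineMap_of_dist_eq_of_dist_eq hXB (by rw [dist_comm, hXC]) hBC
  have hY : Y = lineMap A C (a / (a + c)) :=
    eq_lineMap_of_dist_eq_of_dist_eq hYA (by rw [dist_comm, hYC]) hAC
  have hABC : AffineIndependent ℝ ![A, B, C] :=
    affineIndependent_of_dist_lt_dist_add_dist (by linarith) (by linarith) (by linarith)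
  rw [hX, hZ] at hB'XZ
  obtain ⟨s, rfl, hs⟩ := hABC.menelaus hB'AC hB'XZ
  have hs' : s * (a - c) = a := by
    field_simp at hs
    refine mul_left_cancel₀ hb.ne' ?_
    linear_combination -hs
  rw [dist_sq_lineMap, hY, dist_lineMap_lineMap, dist_comm B A, hAB, hBC, hAC, Real.dist_eq,
    mul_pow, sq_abs]
  field_simp
  linear_combination (-2 * b) * hs'
end

section
/- In a three-circle configuration, let B' be a point lying both on the line through X and Z and on the line through A and C. Suppose S is a point and s > 0 with dist S A = s + a, dist S B = s + b, dist S C = s + c (an Apollonian circle externally tangent to all three circles), and let Q be the point of tangency of the circle centered at S with radius s and the circle centered at B with radius b. Then dist B' Q = dist B' Y (Q lies on the inversion circle centered at B' through Y), and S lies on the line through B and Q. -/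
/-!
The tangency point `Z` divides `BA` and `X` divides `BC` in the ratios `b : a` and `b : c`, so
Menelaus' theorem puts `B' = XZ ∩ AC` at the external centre of similitude of `O_A` and `O_C`:
`c • (B' - A) = a • (B' - C)`. For such a point, `c * |P - A|² - a * |P - C|²` equals
`(c - a) * |P - B'|²` up to a constant, so the circle about `B'` through `Y` is exactly the locus
where `c` times the power with respect to `O_A` equals `a` times the power with respect to `O_C`.
By Stewart's theorem on the segment `SB`, the tangency point `Q` has power `4sab / (s + b)` with
respect to `O_A` and `4scb / (s + b)` with respect to `O_C`, so it lies on that circle.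
-/

open AffineMap EuclideanGeometry RealInnerProductSpace

section Normed

variable {V P : Type*} [NormedAddCommGroup V] [NormedSpace ℝ V] [MetricSpace P]
  [NormedAddTorsor V P]

theorem not_collinear_of_dist_eq_add {A B C : P} {a b c : ℝ} (ha : 0 < a) (hb : 0 < b)
    (hc : 0 < c) (hAB : dist A B = a + b) (hBC : dist B C = b + c) (hAC : dist A C = a + c) :
    ¬ Collinear ℝ {A, B, C} := by
  intro h
  rcases h.wbtw_or_wbtw_or_wbtw with h | h | h <;> have := h.dist_add_dist
  · rw [hAB, hBC, hAC] at this; linarith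
  · rw [hBC, dist_comm, hAC, dist_comm, hAB] at this; linarith
  · rw [dist_comm, hAC, hAB, dist_comm, hBC] at this; linarith

variable [StrictConvexSpace ℝ V]

theorem eq_lineMap_of_dist_eq_add {p w q : P} {r₁ r₂ : ℝ} (hr : r₁ + r₂ ≠ 0)
    (hpq : dist p q = r₁ + r₂) (hpw : dist p w = r₁) (hwq : dist w q = r₂) :
    w = lineMap p q (r₁ / (r₁ + r₂)) := by
  apply eq_lineMap_of_dist_eq_mul_of_dist_eq_mul
  · rw [hpw, hpq, div_mul_cancel₀ _ hr]
  · rw [hwq, hpq, one_sub_div hr, add_sub_cancel_left, div_mul_cancel₀ _ hr]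

theorem sbtw_of_dist_eq_add {p w q : P} {r₁ r₂ : ℝ} (h₁ : 0 < r₁) (h₂ : 0 < r₂)
    (hpq : dist p q = r₁ + r₂) (hpw : dist p w = r₁) (hwq : dist w q = r₂) :
    Sbtw ℝ p w q := by
  refine ⟨?_, ?_, ?_⟩
  · rw [← dist_add_dist_eq_iff, hpw, hwq, hpq]
  · rintro rfl
    simp only [dist_self] at hpw
    linarith
  · rintro rfl
    simp only [dist_self] at hwq
    linarith

end Normed

theorem mul_dist_sq_sub_sq_of_tangency {V P : Type*} [NormedAddCommGroup V]
    [InnerProductSpace ℝ V] [MetricSpace P] [NormedAddTorsor V P] {A B S Q : P} {a b s : ℝ}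
    (hb : 0 < b) (hs : 0 < s) (hAB : dist A B = a + b) (hSA : dist S A = s + a)
    (hSB : dist S B = s + b) (hSQ : dist S Q = s) (hQB : dist Q B = b) :
    (s + b) * (dist Q A ^ 2 - a ^ 2) = 4 * s * a * b := by
  have hpi : ∠ S Q B = Real.pi := (sbtw_of_dist_eq_add hs hb hSB hSQ hQB).angle₁₂₃_eq_pi
  have stewart := dist_sq_mul_dist_add_dist_sq_mul_dist A S B Q hpi
  rw [dist_comm A S, hSA, hAB, hSB, dist_comm B Q, hQB, hSQ, dist_comm A Q] at stewart
  linear_combination -stewart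

theorem linearIndependent_vsub_of_not_collinear {k V P : Type*} [Field k] [AddCommGroup V]
    [Module k V] [AddTorsor V P] {p₁ p₂ p₃ : P} (h : ¬ Collinear k {p₁, p₂, p₃}) :
    LinearIndependent k ![p₁ -ᵥ p₂, p₃ -ᵥ p₂] := by
  rw [LinearIndependent.pair_iff]
  intro s t hst
  by_contra hne
  apply h
  rcases eq_or_ne s 0 with rfl | hs
  · have ht : t ≠ 0 := by tauto
    rw [zero_smul, zero_add, smul_eq_zero_iff_right ht, vsub_eq_zero_iff_eq] at hst
    simpa [hst] using collinear_pair k p₁ p₂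
  · apply collinear_insert_of_mem_affineSpan_pair
    rw [← vsub_vadd p₁ p₂]
    refine AffineSubspace.vadd_mem_of_mem_direction ?_ (left_mem_affineSpan_pair k p₂ p₃)
    rw [direction_affineSpan, mem_vectorSpan_pair_rev]
    refine ⟨-t / s, ?_⟩
    rw [← smul_right_inj hs, smul_smul, mul_div_cancel₀ _ hs, neg_smul]
    exact (eq_neg_of_add_eq_zero_left hst).symm

section Menelaus

variable {k V : Type*} [Field k] [AddCommGroup V] [Module k V] {A B C B' : V}

theorem smul_sub_eq_smul_sub_of_mem_line_lineMap {p q : k}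
    (hind : LinearIndependent k ![A - B, C - B])
    (hXZ : B' ∈ line[k, lineMap B C q, lineMap B A p]) (hAC : B' ∈ line[k, A, C]) :
    (p * (q - 1)) • (B' - A) = (q * (p - 1)) • (B' - C) := by
  obtain ⟨v, rfl⟩ := mem_affineSpan_pair_iff_exists_lineMap_eq.mp hAC
  obtain ⟨u, hu⟩ := mem_affineSpan_pair_iff_exists_lineMap_eq.mp hXZ
  simp only [lineMap_apply_module] at hu ⊢
  have hcomb : ((1 - v) - u * p) • (A - B) + (v - (1 - u) * q) • (C - B) = 0 := by
    linear_combination (norm := module) -hu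
  obtain ⟨e₁, e₂⟩ := LinearIndependent.pair_iff.mp hind _ _ hcomb
  linear_combination (norm := module) (-q * e₁ - p * e₂) • (C - A)

theorem smul_sub_eq_smul_sub_of_mem_line_tangencyPoints {a b c : k} (hb : b ≠ 0)
    (hab : b + a ≠ 0) (hbc : b + c ≠ 0) (hind : LinearIndependent k ![A - B, C - B])
    (hXZ : B' ∈ line[k, lineMap B C (b / (b + c)), lineMap B A (b / (b + a))])
    (hAC : B' ∈ line[k, A, C]) :
    c • (B' - A) = a • (B' - C) := by
  have menelaus := smul_sub_eq_smul_sub_of_mem_line_lineMap hind hXZ hAC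
  have hc : -((b + a) * (b + c) / b) * (b / (b + a) * (b / (b + c) - 1)) = c := by
    field_simp
    ring
  have ha : -((b + a) * (b + c) / b) * (b / (b + c) * (b / (b + a) - 1)) = a := by
    field_simp
    ring
  rw [← hc, mul_smul, menelaus, ← mul_smul, ha]

end Menelaus

section InnerProduct

variable {V P : Type*} [NormedAddCommGroup V] [InnerProductSpace ℝ V] [MetricSpace P]
  [NormedAddTorsor V P]

theorem mul_dist_sq_sub_mul_dist_sq {A C O : P} {α β : ℝ}
    (hO : α • (O -ᵥ A) = β • (O -ᵥ C)) (X : P) :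
    α * dist X A ^ 2 - β * dist X C ^ 2 =
      (α - β) * dist X O ^ 2 + (α * dist O A ^ 2 - β * dist O C ^ 2) := by
  have expand : ∀ Y : P, dist X Y ^ 2 = dist X O ^ 2 + 2 * ⟪X -ᵥ O, O -ᵥ Y⟫ + dist O Y ^ 2 := by
    intro Y
    rw [dist_eq_norm_vsub V, dist_eq_norm_vsub V, dist_eq_norm_vsub V, ← norm_add_sq_real,
      vsub_add_vsub_cancel]
  have hinner : α * ⟪X -ᵥ O, O -ᵥ A⟫ = β * ⟪X -ᵥ O, O -ᵥ C⟫ := by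
    rw [← inner_smul_right, ← inner_smul_right, hO]
  rw [expand A, expand C]
  linear_combination 2 * hinner

theorem dist_eq_dist_of_mul_power_eq {A C O X Y : P} {a c : ℝ} (hac : a ≠ c)
    (hO : c • (O -ᵥ A) = a • (O -ᵥ C)) (hYA : dist A Y = a) (hYC : dist C Y = c)
    (hX : c * (dist X A ^ 2 - a ^ 2) = a * (dist X C ^ 2 - c ^ 2)) :
    dist O X = dist O Y := by
  have atX := mul_dist_sq_sub_mul_dist_sq hO X
  have atY := mul_dist_sq_sub_mul_dist_sq hO Y
  rw [dist_comm Y A, hYA, dist_comm Y C, hYC] at atY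
  have hsq : (c - a) * (dist X O ^ 2 - dist Y O ^ 2) = 0 := by
    linear_combination hX - atX + atY
  rw [mul_eq_zero, sub_eq_zero, sub_eq_zero, eq_comm] at hsq
  rw [dist_comm O X, dist_comm O Y]
  exact (sq_eq_sq₀ dist_nonneg dist_nonneg).mp (hsq.resolve_left hac)

end InnerProduct

/-- The tangency point `Q` of an Apollonian circle `O_S` with `O_B` lies on
the inversion circle centered at `B' = XZ ∩ AC` through `Y`, and the center
`S` lies on the line `BQ`. -/
theorem apollonian_tangency_point_on_inversion_circle
    (A B C X Y Z B' S Q : EuclideanSpace ℝ (Fin 2)) (a b c s : ℝ)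
    (ha : 0 < a) (hb : 0 < b) (hc : 0 < c) (hs : 0 < s)
    (hAB : dist A B = a + b) (hBC : dist B C = b + c) (hAC : dist A C = a + c)
    (hZA : dist A Z = a) (hZB : dist B Z = b)
    (hXB : dist B X = b) (hXC : dist C X = c)
    (hYA : dist A Y = a) (hYC : dist C Y = c)
    (hB'XZ : B' ∈ line[ℝ, X, Z]) (hB'AC : B' ∈ line[ℝ, A, C])
    (hSA : dist S A = s + a) (hSB : dist S B = s + b) (hSC : dist S C = s + c)
    (hQS : dist S Q = s) (hQB : dist B Q = b) :
    dist B' Q = dist B' Y ∧ S ∈ line[ℝ, B, Q] := by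
  have hZ : Z = lineMap B A (b / (b + a)) := eq_lineMap_of_dist_eq_add (by positivity)
    (by rw [dist_comm, hAB, add_comm]) hZB (by rw [dist_comm, hZA])
  have hX : X = lineMap B C (b / (b + c)) := eq_lineMap_of_dist_eq_add (by positivity)
    hBC hXB (by rw [dist_comm, hXC])
  have hind := linearIndependent_vsub_of_not_collinear
    (not_collinear_of_dist_eq_add ha hb hc hAB hBC hAC)
  have hB' : c • (B' - A) = a • (B' - C) := smul_sub_eq_smul_sub_of_mem_line_tangencyPoints
    hb.ne' (by positivity) (by positivity) hind (hX ▸ hZ ▸ hB'XZ) hB'AC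
  have hac : a ≠ c := by
    rintro rfl
    rw [smul_right_inj ha.ne', sub_right_inj] at hB'
    rw [hB', dist_self] at hAC
    linarith
  have hQB' : dist Q B = b := by rw [dist_comm, hQB]
  have powA := mul_dist_sq_sub_sq_of_tangency hb hs hAB hSA hSB hQS hQB'
  have powC := mul_dist_sq_sub_sq_of_tangency hb hs (by rw [dist_comm, hBC, add_comm]) hSC hSB
    hQS hQB'
  have hQ : c * (dist Q A ^ 2 - a ^ 2) = a * (dist Q C ^ 2 - c ^ 2) :=
    mul_left_cancel₀ (by positivity : s + b ≠ 0) (by linear_combination c * powA - a * powC)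
  refine ⟨?_, ?_⟩
  · exact dist_eq_dist_of_mul_power_eq hac hB' hYA hYC hQ
  · have hSQB := sbtw_of_dist_eq_add hs hb hSB hQS hQB'
    exact hSQB.wbtw.collinear.mem_affineSpan_of_mem_of_ne (by simp) (by simp) (by simp)
      hSQB.right_ne
end

section
/- In a three-circle configuration, let B' be a point on line XZ and line AC, and C' a point on line XY and line AB. Suppose S is a point and s > 0 with dist S A = s + a, dist S B = s + b, dist S C = s + c, with Q the point of tangency of the circle centered at S with radius s and the circle centered at B with radius b, and R the point of tangency of the circle centered at S with radius s and the circle centered at C with radius c. Then Q ≠ R, S lies on the line through B and Q and on the line through C and R, dist B' Q = dist B' Y, dist C' R = dist C' Z, and dist S Q = s (so the Apollonian circle is recovered as the circle centered at the intersection of lines BQ and CR passing through Q). -/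
/-!
A point of tangency divides the segment between the two centres in the ratio of the radii, so
all points of tangency are explicit points on the lines joining the centres. Menelaus'
theorem in the triangle `ABC` places `B'` at `A + a / (a - c) • (C - A)`, and two applications of
Stewart's theorem express `dist B' Q ^ 2` through the distances between centres, which are sums
of radii; `dist B' Y` is read off on the line `AC`, and the two agree. The claim about `C'` is the
same statement with `B` and `C` exchanged. If `Q = R`, this point would be the point of tangency of
the circles about `B` and `C`, and by Stewart's theorem its distance from `S` exceeds `s`.
-/

open AffineMap

section Collinear

variable {k V P : Type*} [Field k] [AddCommGroup V] [Module k V] [AddTorsor V P]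

theorem linearIndependent_vsub_of_not_collinear_s13 {A B C : P}
    (h : ¬Collinear k ({A, B, C} : Set P)) : LinearIndependent k ![B -ᵥ A, C -ᵥ A] := by
  rw [LinearIndependent.pair_iff]
  intro s t hst
  by_contra hne
  apply h
  rcases eq_or_ne t 0 with rfl | ht
  · have hs : s ≠ 0 := by tauto
    obtain rfl : B = A := by simpa [hs] using hst
    simpa using collinear_pair k B C
  · have hC : C ∈ line[k, A, B] := by
      rw [← vsub_vadd C A, vadd_left_mem_affineSpan_pair]
      have htC : t • (C -ᵥ A) = -s • (B -ᵥ A) := by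
        rw [neg_smul]; exact eq_neg_of_add_eq_zero_right hst
      exact ⟨t⁻¹ * -s, by rw [mul_smul, ← htC, inv_smul_smul₀ ht]⟩
    have hperm : ({A, B, C} : Set P) = {C, A, B} := by
      ext
      simp only [Set.mem_insert_iff, Set.mem_singleton_iff]
      tauto
    exact hperm ▸ collinear_insert_of_mem_affineSpan_pair hC

theorem menelaus_lineMap {A B C B' : P} (h : ¬Collinear k ({A, B, C} : Set P)) {α β : k}
    (hAC : B' ∈ line[k, A, C]) (hXZ : B' ∈ line[k, lineMap B C β, lineMap A B α]) :
    ∃ t, B' = lineMap A C t ∧ (α + β - 1) * t = α * β := by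
  obtain ⟨t, rfl⟩ := mem_affineSpan_pair_iff_exists_lineMap_eq.mp hAC
  obtain ⟨r, hr⟩ := mem_affineSpan_pair_iff_exists_lineMap_eq.mp hXZ
  refine ⟨t, rfl, ?_⟩
  set u := B -ᵥ A
  set v := C -ᵥ A
  have hX : lineMap B C β -ᵥ A = β • (v - u) + u := by
    rw [lineMap_apply, vadd_vsub_assoc, vsub_sub_vsub_cancel_right]
  have hZ : lineMap A B α -ᵥ A = α • u := lineMap_vsub_left A B α
  have hB' : lineMap A C t -ᵥ A = t • v := lineMap_vsub_left A C t
  rw [← hr, lineMap_apply, vadd_vsub_assoc, ← vsub_sub_vsub_cancel_right _ _ A, hX, hZ] at hB'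
  have hcoef : ((1 - r) * (1 - β) + r * α) • u + ((1 - r) * β - t) • v = 0 := by
    linear_combination (norm := module) hB'
  obtain ⟨hu, hv⟩ := LinearIndependent.pair_iff.mp
    (linearIndependent_vsub_of_not_collinear_s13 h) _ _ hcoef
  linear_combination -(α + β - 1) * hv - β * hu

end Collinear

section StrictConvex

variable {V P : Type*} [NormedAddCommGroup V] [NormedSpace ℝ V] [StrictConvexSpace ℝ V]
  [MetricSpace P] [NormedAddTorsor V P]

noncomputable def tangencyPoint (P₁ P₂ : P) (r₁ r₂ : ℝ) : P :=
  lineMap P₁ P₂ (r₁ / (r₁ + r₂))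

theorem eq_tangencyPoint_of_dist_eq {P₁ P₂ T : P} {r₁ r₂ : ℝ} (h₁ : dist P₁ T = r₁)
    (h₂ : dist P₂ T = r₂) (h : dist P₁ P₂ = r₁ + r₂) : T = tangencyPoint P₁ P₂ r₁ r₂ := by
  rcases eq_or_ne (r₁ + r₂) 0 with h0 | h0
  · have hr₁ : r₁ = 0 := by
      linarith [h₁ ▸ dist_nonneg (x := P₁) (y := T), h₂ ▸ dist_nonneg (x := P₂) (y := T)]
    rw [tangencyPoint, h0, div_zero, lineMap_apply_zero, eq_comm, ← dist_eq_zero, h₁, hr₁]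
  · apply eq_lineMap_of_dist_eq_mul_of_dist_eq_mul
    · rw [h, h₁, div_mul_cancel₀ _ h0]
    · rw [h, dist_comm, h₂]; field_simp; ring

theorem mem_affineSpan_pair_of_dist_add_dist_eq {x y z : P} (h : dist x y + dist y z = dist x z)
    (hxy : x ≠ y) : z ∈ line[ℝ, x, y] :=
  (dist_add_dist_eq_iff.mp h).collinear.mem_affineSpan_of_mem_of_ne (by simp) (by simp) (by simp)
    hxy

end StrictConvex

theorem not_collinear_of_dist_lt_dist_add_dist {V P : Type*} [NormedAddCommGroup V]
    [NormedSpace ℝ V] [MetricSpace P] [NormedAddTorsor V P] {A B C : P}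
    (hB : dist A C < dist A B + dist B C) (hC : dist B A < dist B C + dist C A)
    (hA : dist C B < dist C A + dist A B) : ¬Collinear ℝ ({A, B, C} : Set P) := fun h ↦ by
  rcases h.wbtw_or_wbtw_or_wbtw with hw | hw | hw
  · exact hB.ne hw.dist_add_dist.symm
  · exact hC.ne hw.dist_add_dist.symm
  · exact hA.ne hw.dist_add_dist.symm

section InnerProduct

variable {V P : Type*} [NormedAddCommGroup V] [InnerProductSpace ℝ V] [MetricSpace P]
  [NormedAddTorsor V P]

/-- Stewart's theorem. -/
theorem dist_lineMap_sq (a b p : P) (t : ℝ) :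
    dist (lineMap a b t) p ^ 2 =
      (1 - t) * dist a p ^ 2 + t * dist b p ^ 2 - t * (1 - t) * dist a b ^ 2 := by
  rw [dist_eq_norm_vsub V, dist_eq_norm_vsub V, dist_eq_norm_vsub V, dist_eq_norm_vsub V,
    lineMap_apply, vadd_vsub_assoc, ← vsub_sub_vsub_cancel_right b a p,
    ← vsub_sub_vsub_cancel_right a b p]
  simp only [← real_inner_self_eq_norm_sq, inner_add_left, inner_add_right, inner_sub_left,
    inner_sub_right, real_inner_smul_left, real_inner_smul_right, real_inner_comm (a -ᵥ p)]
  ring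

theorem dist_tangencyPoint_eq_dist_tangencyPoint {A B C S B' : P} {a b c s : ℝ} (ha : 0 < a)
    (hb : 0 < b) (hc : 0 < c) (hs : 0 < s) (hAB : dist A B = a + b) (hBC : dist B C = b + c)
    (hAC : dist A C = a + c) (hSA : dist S A = s + a) (hSB : dist S B = s + b)
    (hSC : dist S C = s + c) (hB'AC : B' ∈ line[ℝ, A, C])
    (hB'XZ : B' ∈ line[ℝ, tangencyPoint B C b c, tangencyPoint A B a b]) :
    dist B' (tangencyPoint S B s b) = dist B' (tangencyPoint A C a c) := by
  have hABC : ¬Collinear ℝ ({A, B, C} : Set P) := by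
    apply not_collinear_of_dist_lt_dist_add_dist <;>
      simp only [dist_comm B A, dist_comm C A, dist_comm C B, hAB, hBC, hAC] <;> linarith
  obtain ⟨t, rfl, ht⟩ := menelaus_lineMap hABC hB'AC hB'XZ
  have ht' : (a - c) * t = a := by
    field_simp at ht
    exact mul_left_cancel₀ hb.ne' (by linear_combination ht)
  have hac : a - c ≠ 0 := fun h ↦ ha.ne (by rw [← ht', h, zero_mul])
  obtain rfl : t = a / (a - c) := by rw [eq_div_iff hac, mul_comm, ht']
  rw [← sq_eq_sq₀ dist_nonneg dist_nonneg, tangencyPoint, tangencyPoint, dist_lineMap_lineMap,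
    dist_comm, dist_lineMap_sq, dist_comm S, dist_lineMap_sq, dist_comm B, dist_lineMap_sq,
    Real.dist_eq, mul_pow, sq_abs]
  rw [dist_comm A S, dist_comm C S, dist_comm C B, hSA, hSC, hBC, hAB, hAC, hSB]
  field_simp
  ring

end InnerProduct

theorem dist_ne_of_externally_tangent {V P : Type*} [NormedAddCommGroup V]
    [InnerProductSpace ℝ V] [MetricSpace P] [NormedAddTorsor V P] {S B C T : P} {s b c : ℝ}
    (hs : 0 < s) (hb : 0 < b) (hc : 0 < c)
    (hSB : dist S B = s + b) (hSC : dist S C = s + c) (hBC : dist B C = b + c)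
    (hS : dist S T = s) (hB : dist B T = b) : dist C T ≠ c := fun hC ↦ by
  have hT := dist_lineMap_sq B C S (b / (b + c))
  rw [← tangencyPoint, ← eq_tangencyPoint_of_dist_eq hB hC hBC, dist_comm, hS, dist_comm, hSB,
    dist_comm, hSC, hBC] at hT
  field_simp at hT
  have : 4 * b * c * s ≠ 0 := by positivity
  exact this (by linear_combination -hT)

/-- The Apollonian circle is recovered as the circle centered at the
intersection of lines `BQ` and `CR`, passing through `Q`. -/
theorem apollonian_circle_recovered
    (A B C X Y Z B' C' S Q R : EuclideanSpace ℝ (Fin 2)) (a b c s : ℝ)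
    (ha : 0 < a) (hb : 0 < b) (hc : 0 < c) (hs : 0 < s)
    (hAB : dist A B = a + b) (hBC : dist B C = b + c) (hAC : dist A C = a + c)
    (hZA : dist A Z = a) (hZB : dist B Z = b)
    (hXB : dist B X = b) (hXC : dist C X = c)
    (hYA : dist A Y = a) (hYC : dist C Y = c)
    (hB'XZ : B' ∈ line[ℝ, X, Z]) (hB'AC : B' ∈ line[ℝ, A, C])
    (hC'XY : C' ∈ line[ℝ, X, Y]) (hC'AB : C' ∈ line[ℝ, A, B])
    (hSA : dist S A = s + a) (hSB : dist S B = s + b) (hSC : dist S C = s + c)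
    (hQS : dist S Q = s) (hQB : dist B Q = b)
    (hRS : dist S R = s) (hRC : dist C R = c) :
    Q ≠ R ∧ S ∈ line[ℝ, B, Q] ∧ S ∈ line[ℝ, C, R] ∧
    dist B' Q = dist B' Y ∧ dist C' R = dist C' Z ∧ dist S Q = s := by
  have hCB : dist C B = c + b := by rw [dist_comm, hBC, add_comm]
  refine ⟨fun hQR ↦ ?_, ?_, ?_, ?_, ?_, hQS⟩
  · exact dist_ne_of_externally_tangent hs hb hc hSB hSC hBC hQS hQB (hQR ▸ hRC)
  · refine mem_affineSpan_pair_of_dist_add_dist_eq ?_ (dist_ne_zero.mp (hQB ▸ hb.ne'))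
    rw [hQB, dist_comm, hQS, dist_comm, hSB, add_comm]
  · refine mem_affineSpan_pair_of_dist_add_dist_eq ?_ (dist_ne_zero.mp (hRC ▸ hc.ne'))
    rw [hRC, dist_comm, hRS, dist_comm, hSC, add_comm]
  · rw [eq_tangencyPoint_of_dist_eq hXB hXC hBC,
      eq_tangencyPoint_of_dist_eq hZA hZB hAB] at hB'XZ
    rw [eq_tangencyPoint_of_dist_eq hQS hQB hSB, eq_tangencyPoint_of_dist_eq hYA hYC hAC]
    exact dist_tangencyPoint_eq_dist_tangencyPoint ha hb hc hs hAB hBC hAC hSA hSB hSC hB'AC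
      hB'XZ
  · rw [eq_tangencyPoint_of_dist_eq hXC hXB hCB,
      eq_tangencyPoint_of_dist_eq hYA hYC hAC] at hC'XY
    rw [eq_tangencyPoint_of_dist_eq hRS hRC hSC, eq_tangencyPoint_of_dist_eq hZA hZB hAB]
    exact dist_tangencyPoint_eq_dist_tangencyPoint ha hc hb hs hAC hCB hAB hSA hSC hSB hC'AB
      hC'XY
end

section
/- In a three-circle configuration, the lines AX, BY, and CZ are concurrent: there exists a point P lying on the line through A and X, on the line through B and Y, and on the line through C and Z (the triangles ABC and XYZ are perspective from a point, the Gergonne point). -/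
/-!
The tangency point of two externally tangent circles divides the segment of centres in the ratio
of the radii, e.g. `(a + b) Z = b A + a B`. So the point `P` with barycentric coordinates
`(1/a : 1/b : 1/c) = (bc : ca : ab)` lies on each of the three cevians: grouping two of its terms,
say `ca B + ab C = a (b + c) X`, writes `P` as a combination of `A` and `X`.
-/

open AffineMap

theorem eq_lineMap_of_dist_eq_add_s14 {V P : Type*} [NormedAddCommGroup V] [NormedSpace ℝ V]
    [StrictConvexSpace ℝ V] [MetricSpace P] [NormedAddTorsor V P] {x y z : P} {a b : ℝ}
    (hxz : dist x z = a + b) (hxy : dist x y = a) (hyz : dist y z = b) :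
    y = lineMap x z (a / (a + b)) := by
  rcases eq_or_ne (a + b) 0 with hab | hab
  · have ha : 0 ≤ a := hxy ▸ dist_nonneg
    have hb : 0 ≤ b := hyz ▸ dist_nonneg
    obtain rfl : a = 0 := by linarith
    simp_all
  · apply eq_lineMap_of_dist_eq_mul_of_dist_eq_mul
    · rw [hxy, hxz, div_mul_cancel₀ _ hab]
    · rw [hyz, hxz, one_sub_div hab, add_sub_cancel_left, div_mul_cancel₀ _ hab]

theorem mem_affineSpan_pair_of_weighted_eq {k V : Type*} [Field k] [AddCommGroup V] [Module k V]
    {A B C X P : V} {x y z t : k} (hs : x + y + z ≠ 0)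
    (hP : (x + y + z) • P = x • A + y • B + z • C) (hX : X = lineMap B C t)
    (ht : t * (y + z) = z) : P ∈ line[k, A, X] := by
  have : P = lineMap A X ((y + z) / (x + y + z)) := by
    rw [← smul_right_inj hs, hP, hX, lineMap_apply_module, lineMap_apply_module, smul_add,
      smul_smul, smul_smul, mul_sub, mul_one, mul_div_cancel₀ _ hs]
    linear_combination (norm := module) ht • (B - C)
  exact this ▸ lineMap_mem_affineSpan_pair _ _ _

/-- In a three-circle configuration, the lines `AX`, `BY`, `CZ` are
concurrent (at the Gergonne point). -/
theorem gergonne_point_exists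
    (A B C X Y Z : EuclideanSpace ℝ (Fin 2)) (a b c : ℝ)
    (ha : 0 < a) (hb : 0 < b) (hc : 0 < c)
    (hAB : dist A B = a + b) (hBC : dist B C = b + c) (hAC : dist A C = a + c)
    (hZA : dist A Z = a) (hZB : dist B Z = b)
    (hXB : dist B X = b) (hXC : dist C X = c)
    (hYA : dist A Y = a) (hYC : dist C Y = c) :
    ∃ P : EuclideanSpace ℝ (Fin 2),
      P ∈ line[ℝ, A, X] ∧ P ∈ line[ℝ, B, Y] ∧ P ∈ line[ℝ, C, Z] := by
  have hZ := eq_lineMap_of_dist_eq_add_s14 hAB hZA (dist_comm Z B ▸ hZB)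
  have hX := eq_lineMap_of_dist_eq_add_s14 hBC hXB (dist_comm X C ▸ hXC)
  have hY := eq_lineMap_of_dist_eq_add_s14 hAC hYA (dist_comm Y C ▸ hYC)
  set P := (b * c + a * c + a * b)⁻¹ • ((b * c) • A + (a * c) • B + (a * b) • C)
  have hP : (b * c + a * c + a * b) • P = (b * c) • A + (a * c) • B + (a * b) • C :=
    smul_inv_smul₀ (by positivity) _
  refine ⟨P, ?_, ?_, ?_⟩
  · exact mem_affineSpan_pair_of_weighted_eq (by positivity) hP hX (by field_simp; ring)
  · exact mem_affineSpan_pair_of_weighted_eq (x := a * c) (y := b * c) (z := a * b) (by positivity)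
      (by linear_combination (norm := module) hP) hY (by field_simp; ring)
  · exact mem_affineSpan_pair_of_weighted_eq (x := a * b) (y := b * c) (z := a * c) (by positivity)
      (by linear_combination (norm := module) hP) hZ (by field_simp; ring)
end
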